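/- arXiv:1902.02237 — 6 statements merged into one kernel-verified Lean document; each statement's English description precedes it below -/
import Mathlib

section
/- Let k be a field, let R be a Hopf k-algebra, and suppose the Ore extension T=R[x;σ,δ] is a Hopf algebra containing R as a Hopf subalgebra, with ε(x)=0 and Δ(x) = s(1⊗x) + t(x⊗1) + v(x⊗x) + w for some s,t,v,w ∈ R⊗_k R. Then (ε⊗I)(s) = 1 and (I⊗ε)(t) = 1 in R, and coassociativity of Δ yields the following identities in R⊗_k R⊗_k R: (I⊗Δ)(v)·(1⊗v) = (Δ⊗I)(v)·(v⊗1); (I⊗Δ)(s)·(1⊗t) = (Δ⊗I)(t)·(s⊗1); (I⊗Δ)(s)·(1⊗v) = (Δ⊗I)(v)·(s⊗1); (I⊗Δ)(s)·(1⊗s) = (Δ⊗I)(s) + (Δ⊗I)(v)·(w⊗1); and (I⊗Δ)(v)·(1⊗t) = (Δ⊗I)(t)·(v⊗1). -/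
open scoped TensorProduct

/-!
The powers of `x` form a basis of `T` as a left `R`-module, so the elements `xᵃ ⊗ xᵇ ⊗ xᶜ`
form a basis of `T ⊗ T ⊗ T` as a left `R ⊗ R ⊗ R`-module and coefficients may be compared.
Applying `ε ⊗ I` to `Δ(x)` gives `x = (ε ⊗ I)(s) x + (ε ⊗ I)(w)`, so `(ε ⊗ I)(s) = 1`;
symmetrically `(I ⊗ ε)(t) = 1`. Expanding both sides of `(Δ ⊗ I) Δ(x) = (I ⊗ Δ) Δ(x)` into
such monomials, the coefficients of `x ⊗ x ⊗ x`, `1 ⊗ x ⊗ 1`, `1 ⊗ x ⊗ x`, `1 ⊗ 1 ⊗ x` and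
`x ⊗ x ⊗ 1` give the five identities.
-/

/-- `T` is an Ore (skew polynomial) extension `R[x; σ, δ]` of `R`, embedded via `ι`:
`δ` is a `σ`-derivation, `ι` is injective, `x · ι(r) = ι(σ r) · x + ι(δ r)`, and
`T` is a free left `R`-module with basis `{xⁱ : i ≥ 0}`. -/
structure IsOreExtension (k : Type*) {R T : Type*} [Field k] [Ring R] [Algebra k R]
    [Ring T] [Algebra k T] (σ : R ≃ₐ[k] R) (δ : R →ₗ[k] R) (ι : R →ₐ[k] T) (x : T) : Prop where
  isSigmaDerivation : ∀ a b : R, δ (a * b) = σ a * δ b + δ a * b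
  injective : Function.Injective ι
  rel : ∀ r : R, x * ι r = ι (σ r) * x + ι (δ r)
  free : ∀ t : T, ∃! a : ℕ →₀ R, t = a.sum fun i r => ι r * x ^ i

/-- A Hopf `k`-algebra structure on the `k`-algebra `T`, bundled as data. -/
structure HopfAlgebraStructure (k T : Type*) [Field k] [Ring T] [Algebra k T] where
  comul : T →ₗ[k] T ⊗[k] T
  counit : T →ₗ[k] k
  antipode : T →ₗ[k] T
  comul_one : comul 1 = 1
  comul_mul : ∀ a b : T, comul (a * b) = comul a * comul b
  counit_one : counit 1 = 1
  counit_mul : ∀ a b : T, counit (a * b) = counit a * counit b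
  coassoc : ∀ t : T, TensorProduct.map comul LinearMap.id (comul t) =
      (TensorProduct.assoc k T T T).symm (TensorProduct.map LinearMap.id comul (comul t))
  counit_comul : ∀ t : T,
      TensorProduct.lid k T (TensorProduct.map counit LinearMap.id (comul t)) = t
  comul_counit : ∀ t : T,
      TensorProduct.rid k T (TensorProduct.map LinearMap.id counit (comul t)) = t
  antipode_mul_id : ∀ t : T,
      LinearMap.mul' k T (TensorProduct.map antipode LinearMap.id (comul t))
        = algebraMap k T (counit t)
  id_mul_antipode : ∀ t : T,
      LinearMap.mul' k T (TensorProduct.map LinearMap.id antipode (comul t))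
        = algebraMap k T (counit t)

/-- The Hopf algebra structure `H` on `T` extends that of the Hopf algebra `R`, i.e. `R` is
(the image of) a Hopf subalgebra of `T` via the injective algebra map `ι`. -/
def ExtendsHopf (k : Type*) {R T : Type*} [Field k] [Ring R] [HopfAlgebra k R]
    [Ring T] [Algebra k T] (ι : R →ₐ[k] T) (H : HopfAlgebraStructure k T) : Prop :=
  (∀ r : R, H.counit (ι r) = Coalgebra.counit r) ∧
  (∀ r : R, H.comul (ι r) =
      TensorProduct.map ι.toLinearMap ι.toLinearMap (Coalgebra.comul r)) ∧
  (∀ r : R, H.antipode (ι r) = ι (HopfAlgebra.antipode (R := k) r))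

section PowerBasis

variable {k R T : Type*} [CommSemiring k] [Semiring R] [Algebra k R] [Semiring T] [Algebra k T]

def IsFreeOnPowers (ι : R →ₐ[k] T) (x : T) : Prop :=
  ∀ t : T, ∃! a : ℕ →₀ R, t = a.sum fun i r => ι r * x ^ i

variable {ι : R →ₐ[k] T} {x : T}

namespace IsFreeOnPowers

variable (hfree : IsFreeOnPowers ι x)
include hfree

noncomputable def coeffs (t : T) : ℕ →₀ R := (hfree t).choose

lemma coeffs_eq {t : T} {a : ℕ →₀ R} (h : t = a.sum fun i r => ι r * x ^ i) :
    hfree.coeffs t = a :=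
  ((hfree t).choose_spec.2 a h).symm

lemma eq_sum_coeffs (t : T) : t = (hfree.coeffs t).sum fun i r => ι r * x ^ i :=
  (hfree t).choose_spec.1

noncomputable def coeff (i : ℕ) : T →ₗ[k] R where
  toFun t := hfree.coeffs t i
  map_add' t₁ t₂ := by
    rw [hfree.coeffs_eq (a := hfree.coeffs t₁ + hfree.coeffs t₂), Finsupp.add_apply]
    rw [Finsupp.sum_add_index' (by simp) (fun i r₁ r₂ => by rw [map_add, add_mul]),
      ← hfree.eq_sum_coeffs, ← hfree.eq_sum_coeffs]
  map_smul' c t := by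
    rw [hfree.coeffs_eq (a := c • hfree.coeffs t)]
    · rfl
    rw [Finsupp.sum_smul_index' (by simp)]
    simp only [map_smul, smul_mul_assoc]
    rw [← Finsupp.smul_sum, ← hfree.eq_sum_coeffs]

lemma coeff_mul_pow (r : R) (i j : ℕ) : hfree.coeff i (ι r * x ^ j) = Finsupp.single j r i := by
  change hfree.coeffs _ i = _
  rw [hfree.coeffs_eq (a := Finsupp.single j r) (by rw [Finsupp.sum_single_index (by simp)])]

lemma eq_one_of_eq_mul_add {p q : R} (h : x = ι p * x + ι q) : p = 1 := by
  have hx : hfree.coeff 1 x = 1 := by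
    simpa using hfree.coeff_mul_pow 1 1 1
  have hp := hfree.coeff_mul_pow p 1 1
  have hq := hfree.coeff_mul_pow q 1 0
  simp only [pow_one, pow_zero, mul_one] at hp hq
  have hpq : hfree.coeff 1 (ι p * x + ι q) = p := by
    simp [hp, hq]
  rw [← h, hx] at hpq
  exact hpq.symm

noncomputable def coeff3 (a b c : ℕ) : (T ⊗[k] T) ⊗[k] T →ₗ[k] (R ⊗[k] R) ⊗[k] R :=
  TensorProduct.map (TensorProduct.map (hfree.coeff a) (hfree.coeff b)) (hfree.coeff c)

end IsFreeOnPowers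

end PowerBasis

section Monomials

open Algebra.TensorProduct (map assoc)

variable {k R T : Type*} [CommSemiring k] [Semiring R] [Algebra k R] [Semiring T] [Algebra k T]
  (ι : R →ₐ[k] T) (x : T)

noncomputable def monomial3 (u : (R ⊗[k] R) ⊗[k] R) (a b c : ℕ) : (T ⊗[k] T) ⊗[k] T :=
  map (map ι ι) ι u * (((x ^ a) ⊗ₜ[k] (x ^ b)) ⊗ₜ[k] (x ^ c))

variable {ι x}

lemma map_mul_pow_tmul_pow_tmul_pow (u : (R ⊗[k] R) ⊗[k] R) (a b c : ℕ) :
    map (map ι ι) ι u * (((x ^ a) ⊗ₜ[k] (x ^ b)) ⊗ₜ[k] (x ^ c)) = monomial3 ι x u a b c :=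
  rfl

lemma monomial3_add (u u' : (R ⊗[k] R) ⊗[k] R) (a b c : ℕ) :
    monomial3 ι x (u + u') a b c = monomial3 ι x u a b c + monomial3 ι x u' a b c := by
  rw [monomial3, map_add, add_mul, monomial3, monomial3]

lemma map_mul_monomial3 (u u' : (R ⊗[k] R) ⊗[k] R) (a b c : ℕ) :
    map (map ι ι) ι u * monomial3 ι x u' a b c = monomial3 ι x (u * u') a b c := by
  rw [monomial3, monomial3, map_mul, mul_assoc]

lemma map_mul_tmul_pow (p : R ⊗[k] R) (a b c : ℕ) :
    (map ι ι p * ((x ^ a) ⊗ₜ[k] (x ^ b))) ⊗ₜ[k] (x ^ c) = monomial3 ι x (p ⊗ₜ 1) a b c := by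
  rw [monomial3, Algebra.TensorProduct.map_tmul, map_one, Algebra.TensorProduct.tmul_mul_tmul,
    one_mul]

lemma assoc_symm_pow_tmul_map_mul (p : R ⊗[k] R) (a b c : ℕ) :
    (assoc k k k T T T).symm ((x ^ a) ⊗ₜ[k] (map ι ι p * ((x ^ b) ⊗ₜ[k] (x ^ c))))
      = monomial3 ι x ((assoc k k k R R R).symm (1 ⊗ₜ p)) a b c := by
  induction p using TensorProduct.induction_on with
  | zero => simp [monomial3]
  | tmul r₁ r₂ => simp [monomial3]
  | add p p' hp hp' =>
    rw [map_add, add_mul, TensorProduct.tmul_add, map_add, hp, hp', TensorProduct.tmul_add,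
      map_add, monomial3_add]

lemma IsFreeOnPowers.coeff3_monomial3 (hfree : IsFreeOnPowers ι x) (u : (R ⊗[k] R) ⊗[k] R)
    (a b c a' b' c' : ℕ) :
    hfree.coeff3 a b c (monomial3 ι x u a' b' c')
      = if a' = a ∧ b' = b ∧ c' = c then u else 0 := by
  induction u using TensorProduct.induction_on with
  | zero => simp [monomial3]
  | tmul p r =>
    induction p using TensorProduct.induction_on with
    | zero => simp [monomial3]
    | tmul r₁ r₂ =>
      simp only [coeff3, monomial3, Algebra.TensorProduct.map_tmul,
        Algebra.TensorProduct.tmul_mul_tmul, TensorProduct.map_tmul, hfree.coeff_mul_pow,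
        Finsupp.single_apply]
      split_ifs <;> simp_all
    | add p p' hp hp' =>
      rw [TensorProduct.add_tmul, monomial3_add, map_add, hp, hp']
      split_ifs <;> simp
  | add u u' hu hu' =>
    rw [monomial3_add, map_add, hu, hu']
    split_ifs <;> simp

end Monomials

namespace HopfAlgebraStructure

variable {k T : Type*} [Field k] [Ring T] [Algebra k T] (H : HopfAlgebraStructure k T)

noncomputable def comulAlgHom : T →ₐ[k] T ⊗[k] T :=
  AlgHom.ofLinearMap H.comul H.comul_one H.comul_mul

noncomputable def counitAlgHom : T →ₐ[k] k :=
  AlgHom.ofLinearMap H.counit H.counit_one H.counit_mul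

@[simp]
lemma counitAlgHom_apply (u : T) : H.counitAlgHom u = H.counit u := rfl

lemma comulAlgHom_pow_zero (x : T) : H.comulAlgHom (x ^ 0) = (x ^ 0) ⊗ₜ[k] (x ^ 0) := by
  rw [pow_zero, map_one, Algebra.TensorProduct.one_def]

end HopfAlgebraStructure

section OreHopf

open Algebra.TensorProduct (map assoc lid rid)

variable {k R T : Type*} [Field k] [Semiring R] [Bialgebra k R] [Ring T] [Algebra k T]
  {ι : R →ₐ[k] T} {x : T} {H : HopfAlgebraStructure k T} {s t v w : R ⊗[k] R}

lemma lid_map_counitAlgHom_map (hcounit : ∀ r : R, H.counit (ι r) = Coalgebra.counit r)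
    (p : R ⊗[k] R) :
    lid k T (map H.counitAlgHom (AlgHom.id k T) (map ι ι p))
      = ι (TensorProduct.lid k R (TensorProduct.map Coalgebra.counit LinearMap.id p)) := by
  induction p using TensorProduct.induction_on with
  | zero => simp
  | tmul r₁ r₂ => simp [hcounit]
  | add p p' hp hp' => simp only [map_add, hp, hp']

lemma rid_map_counitAlgHom_map (hcounit : ∀ r : R, H.counit (ι r) = Coalgebra.counit r)
    (p : R ⊗[k] R) :
    rid k k T (map (AlgHom.id k T) H.counitAlgHom (map ι ι p))
      = ι (TensorProduct.rid k R (TensorProduct.map LinearMap.id Coalgebra.counit p)) := by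
  induction p using TensorProduct.induction_on with
  | zero => simp
  | tmul r₁ r₂ => simp [hcounit]
  | add p p' hp hp' => simp only [map_add, hp, hp']

lemma map_comulAlgHom_map
    (hcomul : ∀ r : R, H.comulAlgHom (ι r) = map ι ι (Coalgebra.comul r)) (p : R ⊗[k] R) :
    map H.comulAlgHom (AlgHom.id k T) (map ι ι p)
      = map (map ι ι) ι (TensorProduct.map Coalgebra.comul LinearMap.id p) := by
  induction p using TensorProduct.induction_on with
  | zero => simp
  | tmul r₁ r₂ => simp [← hcomul]
  | add p p' hp hp' => simp only [map_add, hp, hp']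

lemma assoc_symm_map_comulAlgHom_map
    (hcomul : ∀ r : R, H.comulAlgHom (ι r) = map ι ι (Coalgebra.comul r)) (p : R ⊗[k] R) :
    (assoc k k k T T T).symm (map (AlgHom.id k T) H.comulAlgHom (map ι ι p))
      = map (map ι ι) ι
          ((assoc k k k R R R).symm (TensorProduct.map LinearMap.id Coalgebra.comul p)) := by
  have hmap : map (AlgHom.id k T) H.comulAlgHom (map ι ι p)
      = map ι (map ι ι) (TensorProduct.map LinearMap.id Coalgebra.comul p) := by
    induction p using TensorProduct.induction_on with
    | zero => simp
    | tmul r₁ r₂ => simp [← hcomul]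
    | add p p' hp hp' => simp only [map_add, hp, hp']
  rw [hmap]
  exact (TensorProduct.map_map_assoc_symm ι.toLinearMap ι.toLinearMap ι.toLinearMap _).symm

variable (hx : H.comulAlgHom x = map ι ι s * ((1 : T) ⊗ₜ[k] x) + map ι ι t * (x ⊗ₜ[k] (1 : T))
  + map ι ι v * (x ⊗ₜ[k] x) + map ι ι w)
include hx

lemma comulAlgHom_pow_one :
    H.comulAlgHom (x ^ 1) = map ι ι s * ((x ^ 0) ⊗ₜ[k] (x ^ 1))
      + map ι ι t * ((x ^ 1) ⊗ₜ[k] (x ^ 0)) + map ι ι v * ((x ^ 1) ⊗ₜ[k] (x ^ 1))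
      + map ι ι w * ((x ^ 0) ⊗ₜ[k] (x ^ 0)) := by
  rw [pow_zero, pow_one, ← Algebra.TensorProduct.one_def, mul_one]
  exact hx

lemma lid_map_counit_eq_one (hfree : IsFreeOnPowers ι x)
    (hcounit : ∀ r : R, H.counit (ι r) = Coalgebra.counit r) (hε : H.counit x = 0) :
    TensorProduct.lid k R (TensorProduct.map Coalgebra.counit LinearMap.id s) = 1 := by
  refine hfree.eq_one_of_eq_mul_add
    (q := TensorProduct.lid k R (TensorProduct.map Coalgebra.counit LinearMap.id w)) ?_
  calc x = lid k T (map H.counitAlgHom (AlgHom.id k T) (H.comulAlgHom x)) :=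
        (H.counit_comul x).symm
    _ = _ := by simp [hx, lid_map_counitAlgHom_map hcounit, hε, H.counit_one]

lemma rid_map_counit_eq_one (hfree : IsFreeOnPowers ι x)
    (hcounit : ∀ r : R, H.counit (ι r) = Coalgebra.counit r) (hε : H.counit x = 0) :
    TensorProduct.rid k R (TensorProduct.map LinearMap.id Coalgebra.counit t) = 1 := by
  refine hfree.eq_one_of_eq_mul_add
    (q := TensorProduct.rid k R (TensorProduct.map LinearMap.id Coalgebra.counit w)) ?_
  calc x = rid k k T (map (AlgHom.id k T) H.counitAlgHom (H.comulAlgHom x)) :=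
        (H.comul_counit x).symm
    _ = _ := by simp [hx, rid_map_counitAlgHom_map hcounit, hε, H.counit_one]

lemma map_comulAlgHom_id_comulAlgHom
    (hcomul : ∀ r : R, H.comulAlgHom (ι r) = map ι ι (Coalgebra.comul r)) :
    map H.comulAlgHom (AlgHom.id k T) (H.comulAlgHom x)
      = monomial3 ι x (TensorProduct.map Coalgebra.comul LinearMap.id s) 0 0 1
        + monomial3 ι x (TensorProduct.map Coalgebra.comul LinearMap.id t * (s ⊗ₜ 1)) 0 1 0
        + monomial3 ι x (TensorProduct.map Coalgebra.comul LinearMap.id t * (t ⊗ₜ 1)) 1 0 0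
        + monomial3 ι x (TensorProduct.map Coalgebra.comul LinearMap.id t * (v ⊗ₜ 1)) 1 1 0
        + monomial3 ι x (TensorProduct.map Coalgebra.comul LinearMap.id t * (w ⊗ₜ 1)) 0 0 0
        + monomial3 ι x (TensorProduct.map Coalgebra.comul LinearMap.id v * (s ⊗ₜ 1)) 0 1 1
        + monomial3 ι x (TensorProduct.map Coalgebra.comul LinearMap.id v * (t ⊗ₜ 1)) 1 0 1
        + monomial3 ι x (TensorProduct.map Coalgebra.comul LinearMap.id v * (v ⊗ₜ 1)) 1 1 1
        + monomial3 ι x (TensorProduct.map Coalgebra.comul LinearMap.id v * (w ⊗ₜ 1)) 0 0 1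
        + monomial3 ι x (TensorProduct.map Coalgebra.comul LinearMap.id w) 0 0 0 := by
  rw [← pow_one (H.comulAlgHom x), ← map_pow, comulAlgHom_pow_one hx]
  simp only [map_add, map_mul, map_comulAlgHom_map hcomul, Algebra.TensorProduct.map_tmul,
    AlgHom.id_apply, H.comulAlgHom_pow_zero, comulAlgHom_pow_one hx, TensorProduct.add_tmul,
    map_mul_tmul_pow, mul_add, map_mul_pow_tmul_pow_tmul_pow, map_mul_monomial3]
  abel

lemma assoc_symm_map_id_comulAlgHom_comulAlgHom
    (hcomul : ∀ r : R, H.comulAlgHom (ι r) = map ι ι (Coalgebra.comul r)) :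
    (assoc k k k T T T).symm (map (AlgHom.id k T) H.comulAlgHom (H.comulAlgHom x))
      = monomial3 ι x ((assoc k k k R R R).symm
            (TensorProduct.map LinearMap.id Coalgebra.comul s * (1 ⊗ₜ s))) 0 0 1
        + monomial3 ι x ((assoc k k k R R R).symm
            (TensorProduct.map LinearMap.id Coalgebra.comul s * (1 ⊗ₜ t))) 0 1 0
        + monomial3 ι x ((assoc k k k R R R).symm
            (TensorProduct.map LinearMap.id Coalgebra.comul s * (1 ⊗ₜ v))) 0 1 1
        + monomial3 ι x ((assoc k k k R R R).symm
            (TensorProduct.map LinearMap.id Coalgebra.comul s * (1 ⊗ₜ w))) 0 0 0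
        + monomial3 ι x ((assoc k k k R R R).symm
            (TensorProduct.map LinearMap.id Coalgebra.comul t)) 1 0 0
        + monomial3 ι x ((assoc k k k R R R).symm
            (TensorProduct.map LinearMap.id Coalgebra.comul v * (1 ⊗ₜ s))) 1 0 1
        + monomial3 ι x ((assoc k k k R R R).symm
            (TensorProduct.map LinearMap.id Coalgebra.comul v * (1 ⊗ₜ t))) 1 1 0
        + monomial3 ι x ((assoc k k k R R R).symm
            (TensorProduct.map LinearMap.id Coalgebra.comul v * (1 ⊗ₜ v))) 1 1 1
        + monomial3 ι x ((assoc k k k R R R).symm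
            (TensorProduct.map LinearMap.id Coalgebra.comul v * (1 ⊗ₜ w))) 1 0 0
        + monomial3 ι x ((assoc k k k R R R).symm
            (TensorProduct.map LinearMap.id Coalgebra.comul w)) 0 0 0 := by
  rw [← pow_one (H.comulAlgHom x), ← map_pow, comulAlgHom_pow_one hx]
  simp only [map_add, map_mul, assoc_symm_map_comulAlgHom_map hcomul,
    Algebra.TensorProduct.map_tmul, AlgHom.id_apply, H.comulAlgHom_pow_zero,
    comulAlgHom_pow_one hx, TensorProduct.tmul_add, assoc_symm_pow_tmul_map_mul,
    Algebra.TensorProduct.assoc_symm_tmul, map_mul_pow_tmul_pow_tmul_pow, mul_add,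
    map_mul_monomial3]
  simp only [← map_mul (assoc k k k R R R).symm]
  abel

end OreHopf

/-- Suppose the Ore extension `T = R[x; σ, δ]` of the Hopf `k`-algebra `R` is a Hopf algebra
containing `R` as a Hopf subalgebra, with `ε(x) = 0` and
`Δ(x) = s(1 ⊗ x) + t(x ⊗ 1) + v(x ⊗ x) + w`.  Then `(ε ⊗ I)(s) = 1`, `(I ⊗ ε)(t) = 1`, and
coassociativity yields equations (2)–(6) of the paper:
`(I⊗Δ)(v)·(1⊗v) = (Δ⊗I)(v)·(v⊗1)`, `(I⊗Δ)(s)·(1⊗t) = (Δ⊗I)(t)·(s⊗1)`,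
`(I⊗Δ)(s)·(1⊗v) = (Δ⊗I)(v)·(s⊗1)`, `(I⊗Δ)(s)·(1⊗s) = (Δ⊗I)(s) + (Δ⊗I)(v)·(w⊗1)` and
`(I⊗Δ)(v)·(1⊗t) = (Δ⊗I)(t)·(v⊗1)` in `R ⊗ₖ R ⊗ₖ R`. -/
theorem stmt7 {k R T : Type*} [Field k] [Ring R] [HopfAlgebra k R] [Ring T] [Algebra k T]
    (σ : R ≃ₐ[k] R) (δ : R →ₗ[k] R) (ι : R →ₐ[k] T) (x : T)
    (hT : IsOreExtension k σ δ ι x)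
    (H : HopfAlgebraStructure k T) (hH : ExtendsHopf k ι H)
    (hε : H.counit x = 0)
    (s t v w : R ⊗[k] R)
    (hx : H.comul x
        = TensorProduct.map ι.toLinearMap ι.toLinearMap s * ((1 : T) ⊗ₜ[k] x)
          + TensorProduct.map ι.toLinearMap ι.toLinearMap t * (x ⊗ₜ[k] (1 : T))
          + TensorProduct.map ι.toLinearMap ι.toLinearMap v * (x ⊗ₜ[k] x)
          + TensorProduct.map ι.toLinearMap ι.toLinearMap w) :
    TensorProduct.lid k R
        (TensorProduct.map (Coalgebra.counit (R := k)) (LinearMap.id : R →ₗ[k] R) s) = 1 ∧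
    TensorProduct.rid k R
        (TensorProduct.map (LinearMap.id : R →ₗ[k] R) (Coalgebra.counit (R := k)) t) = 1 ∧
    (TensorProduct.assoc k R R R).symm
        (TensorProduct.map (LinearMap.id : R →ₗ[k] R) (Coalgebra.comul (R := k)) v
          * ((1 : R) ⊗ₜ[k] v))
      = TensorProduct.map (Coalgebra.comul (R := k)) (LinearMap.id : R →ₗ[k] R) v
          * (v ⊗ₜ[k] (1 : R)) ∧
    (TensorProduct.assoc k R R R).symm
        (TensorProduct.map (LinearMap.id : R →ₗ[k] R) (Coalgebra.comul (R := k)) s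
          * ((1 : R) ⊗ₜ[k] t))
      = TensorProduct.map (Coalgebra.comul (R := k)) (LinearMap.id : R →ₗ[k] R) t
          * (s ⊗ₜ[k] (1 : R)) ∧
    (TensorProduct.assoc k R R R).symm
        (TensorProduct.map (LinearMap.id : R →ₗ[k] R) (Coalgebra.comul (R := k)) s
          * ((1 : R) ⊗ₜ[k] v))
      = TensorProduct.map (Coalgebra.comul (R := k)) (LinearMap.id : R →ₗ[k] R) v
          * (s ⊗ₜ[k] (1 : R)) ∧
    (TensorProduct.assoc k R R R).symm
        (TensorProduct.map (LinearMap.id : R →ₗ[k] R) (Coalgebra.comul (R := k)) s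
          * ((1 : R) ⊗ₜ[k] s))
      = TensorProduct.map (Coalgebra.comul (R := k)) (LinearMap.id : R →ₗ[k] R) s
          + TensorProduct.map (Coalgebra.comul (R := k)) (LinearMap.id : R →ₗ[k] R) v
            * (w ⊗ₜ[k] (1 : R)) ∧
    (TensorProduct.assoc k R R R).symm
        (TensorProduct.map (LinearMap.id : R →ₗ[k] R) (Coalgebra.comul (R := k)) v
          * ((1 : R) ⊗ₜ[k] t))
      = TensorProduct.map (Coalgebra.comul (R := k)) (LinearMap.id : R →ₗ[k] R) t
          * (v ⊗ₜ[k] (1 : R)) := by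
  obtain ⟨hcounit, hcomul, -⟩ := hH
  have hfree : IsFreeOnPowers ι x := hT.free
  have hcoassoc := (map_comulAlgHom_id_comulAlgHom hx hcomul).symm.trans
    ((H.coassoc x).trans (assoc_symm_map_id_comulAlgHom_comulAlgHom hx hcomul))
  have hcoeff (a b c : ℕ) := congrArg (hfree.coeff3 a b c) hcoassoc
  have h111 := hcoeff 1 1 1
  have h010 := hcoeff 0 1 0
  have h011 := hcoeff 0 1 1
  have h001 := hcoeff 0 0 1
  have h110 := hcoeff 1 1 0
  simp only [map_add, hfree.coeff3_monomial3, zero_ne_one, one_ne_zero, and_self, and_false,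
    false_and, ↓reduceIte, add_zero, zero_add] at h111 h010 h011 h001 h110
  exact ⟨lid_map_counit_eq_one hx hfree hcounit hε, rid_map_counit_eq_one hx hfree hcounit hε,
    h111.symm, h010.symm, h011.symm, h001.symm, h110.symm⟩
end

section
/- Let k be a field and let R be a Hopf k-algebra that is a domain. Suppose s = ∑s₁⊗s₂ ∈ R⊗_k R satisfies (I⊗Δ)(s)·(1⊗s) = (Δ⊗I)(s) in R⊗_k R⊗_k R and (ε⊗I)(s) = ∑ε(s₁)s₂ = 1. Then the element α := (I⊗ε)(s) = ∑s₁ε(s₂) satisfies α·(∑S(s₁)s₂) = 1; consequently α is invertible in R with α^{-1} = ∑S(s₁)s₂ = m∘(S⊗I)(s). -/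
set_option maxHeartbeats 1600000
set_option synthInstance.maxHeartbeats 400000


open scoped TensorProduct

/-- Let `R` be a Hopf `k`-algebra that is a domain and let `s = ∑ s₁ ⊗ s₂ ∈ R ⊗ₖ R` satisfy
`(I⊗Δ)(s)·(1⊗s) = (Δ⊗I)(s)` and `(ε⊗I)(s) = 1`.  Then `α := (I⊗ε)(s) = ∑ s₁ε(s₂)` satisfies
`α · (∑ S(s₁)s₂) = 1`; consequently `α` is invertible in `R` with `α⁻¹ = ∑ S(s₁)s₂`. -/
theorem stmt8 {k R : Type*} [Field k] [Ring R] [HopfAlgebra k R] [IsDomain R]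
    (s : R ⊗[k] R)
    (h1 : (TensorProduct.assoc k R R R).symm
        (TensorProduct.map (LinearMap.id : R →ₗ[k] R) (Coalgebra.comul (R := k)) s
          * ((1 : R) ⊗ₜ[k] s))
      = TensorProduct.map (Coalgebra.comul (R := k)) (LinearMap.id : R →ₗ[k] R) s)
    (h2 : TensorProduct.lid k R
        (TensorProduct.map (Coalgebra.counit (R := k)) (LinearMap.id : R →ₗ[k] R) s) = 1) :
    TensorProduct.rid k R
        (TensorProduct.map (LinearMap.id : R →ₗ[k] R) (Coalgebra.counit (R := k)) s)
      * LinearMap.mul' k R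
        (TensorProduct.map (HopfAlgebra.antipode (R := k)) (LinearMap.id : R →ₗ[k] R) s)
      = 1 ∧
    LinearMap.mul' k R
        (TensorProduct.map (HopfAlgebra.antipode (R := k)) (LinearMap.id : R →ₗ[k] R) s)
      * TensorProduct.rid k R
        (TensorProduct.map (LinearMap.id : R →ₗ[k] R) (Coalgebra.counit (R := k)) s)
      = 1 := by
  classical
  set ε : R →ₗ[k] k := Coalgebra.counit (R := k) with hε
  set Δ : R →ₗ[k] R ⊗[k] R := Coalgebra.comul (R := k) with hΔ
  set Si : R →ₗ[k] R := HopfAlgebra.antipode (R := k) with hSi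
  -- the linear map (x ⊗ y) ⊗ z ↦ ε z • (x ⊗ y)
  set G : (R ⊗[k] R) ⊗[k] R →ₗ[k] R ⊗[k] R :=
    (TensorProduct.rid k (R ⊗[k] R)).toLinearMap ∘ₗ
      TensorProduct.map (LinearMap.id : R ⊗[k] R →ₗ[k] R ⊗[k] R) ε with hG
  have hGtmul : ∀ (c : R ⊗[k] R) (z : R), G (c ⊗ₜ z) = ε z • c := by
    intro c z
    simp [hG]
  -- α
  set A : R := TensorProduct.rid k R
    (TensorProduct.map (LinearMap.id : R →ₗ[k] R) ε s) with hA
  -- β as a linear map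
  set B : R ⊗[k] R →ₗ[k] R :=
    LinearMap.mul' k R ∘ₗ TensorProduct.map Si (LinearMap.id : R →ₗ[k] R) with hB
  -- inner lemma
  have hL : ∀ (c : R ⊗[k] R) (a a' b' : R),
      G ((TensorProduct.assoc k R R R).symm ((a ⊗ₜ[k] c) * ((1 : R) ⊗ₜ[k] (a' ⊗ₜ[k] b'))))
        = ε b' • (a ⊗ₜ[k]
            ((TensorProduct.rid k R (TensorProduct.map (LinearMap.id : R →ₗ[k] R) ε c)) * a')) := by
    intro c a a' b'
    induction c using TensorProduct.induction_on with
    | zero => simp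
    | tmul c₁ c₂ =>
        have h : (a ⊗ₜ[k] (c₁ ⊗ₜ[k] c₂)) * ((1 : R) ⊗ₜ[k] (a' ⊗ₜ[k] b'))
            = (a * 1) ⊗ₜ[k] ((c₁ * a') ⊗ₜ[k] (c₂ * b')) := by
          simp [Algebra.TensorProduct.tmul_mul_tmul]
        rw [h]
        simp only [mul_one, TensorProduct.assoc_symm_tmul, hGtmul]
        rw [Bialgebra.counit_mul]
        have hc : TensorProduct.rid k R
            (TensorProduct.map (LinearMap.id : R →ₗ[k] R) ε (c₁ ⊗ₜ[k] c₂)) = ε c₂ • c₁ := by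
          simp
        rw [hc, smul_mul_assoc, TensorProduct.tmul_smul, smul_smul, mul_comm]
    | add x y hx hy =>
        have h : (a ⊗ₜ[k] (x + y)) * ((1 : R) ⊗ₜ[k] (a' ⊗ₜ[k] b'))
            = (a ⊗ₜ[k] x) * ((1 : R) ⊗ₜ[k] (a' ⊗ₜ[k] b'))
              + (a ⊗ₜ[k] y) * ((1 : R) ⊗ₜ[k] (a' ⊗ₜ[k] b')) := by
          rw [TensorProduct.tmul_add, add_mul]
        rw [h, map_add, map_add, hx, hy]
        simp [TensorProduct.tmul_add, add_mul, smul_add]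
  -- main bilinear lemma
  have hM : ∀ (t u : R ⊗[k] R),
      G ((TensorProduct.assoc k R R R).symm
          (TensorProduct.map (LinearMap.id : R →ₗ[k] R) Δ u * ((1 : R) ⊗ₜ[k] t)))
        = u * ((1 : R) ⊗ₜ[k]
            (TensorProduct.rid k R (TensorProduct.map (LinearMap.id : R →ₗ[k] R) ε t))) := by
    intro t
    induction t using TensorProduct.induction_on with
    | zero =>
        intro u
        simp
    | tmul a' b' =>
        intro u
        induction u using TensorProduct.induction_on with
        | zero => simp
        | tmul a b =>
            have hmap : TensorProduct.map (LinearMap.id : R →ₗ[k] R) Δ (a ⊗ₜ[k] b)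
                = a ⊗ₜ[k] (Δ b) := by simp
            rw [hmap, hL (Δ b) a a' b']
            have hcb : TensorProduct.rid k R
                (TensorProduct.map (LinearMap.id : R →ₗ[k] R) ε (Δ b)) = b := by
              have := Coalgebra.lTensor_counit_comul (R := k) (A := R) b
              have hlt : TensorProduct.map (LinearMap.id : R →ₗ[k] R) ε (Δ b)
                  = ε.lTensor R (Δ b) := rfl
              rw [hlt, this]
              simp
            rw [hcb]
            have : TensorProduct.map (LinearMap.id : R →ₗ[k] R) ε (a' ⊗ₜ[k] b')
                = a' ⊗ₜ[k] (ε b') := by simp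
            rw [this]
            simp [Algebra.TensorProduct.tmul_mul_tmul, TensorProduct.tmul_smul,
              TensorProduct.smul_tmul', mul_smul_comm]
        | add x y hx hy =>
            have h : TensorProduct.map (LinearMap.id : R →ₗ[k] R) Δ (x + y)
                * ((1 : R) ⊗ₜ[k] (a' ⊗ₜ[k] b'))
                = TensorProduct.map (LinearMap.id : R →ₗ[k] R) Δ x
                    * ((1 : R) ⊗ₜ[k] (a' ⊗ₜ[k] b'))
                  + TensorProduct.map (LinearMap.id : R →ₗ[k] R) Δ y
                    * ((1 : R) ⊗ₜ[k] (a' ⊗ₜ[k] b')) := by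
              rw [map_add, add_mul]
            rw [h, map_add, map_add, hx, hy, add_mul]
    | add x y hx hy =>
        intro u
        have h : TensorProduct.map (LinearMap.id : R →ₗ[k] R) Δ u * ((1 : R) ⊗ₜ[k] (x + y))
            = TensorProduct.map (LinearMap.id : R →ₗ[k] R) Δ u * ((1 : R) ⊗ₜ[k] x)
              + TensorProduct.map (LinearMap.id : R →ₗ[k] R) Δ u * ((1 : R) ⊗ₜ[k] y) := by
          rw [TensorProduct.tmul_add, mul_add]
        rw [h, map_add, map_add, hx, hy]
        rw [map_add, map_add, TensorProduct.tmul_add, mul_add]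
  -- G of the right-hand side of h1
  have hR : ∀ u : R ⊗[k] R,
      G (TensorProduct.map Δ (LinearMap.id : R →ₗ[k] R) u)
        = Δ (TensorProduct.rid k R (TensorProduct.map (LinearMap.id : R →ₗ[k] R) ε u)) := by
    intro u
    induction u using TensorProduct.induction_on with
    | zero => simp
    | tmul a b =>
        have h : TensorProduct.map Δ (LinearMap.id : R →ₗ[k] R) (a ⊗ₜ[k] b)
            = (Δ a) ⊗ₜ[k] b := by simp
        rw [h, hGtmul]
        simp [map_smul]
    | add x y hx hy => simp only [map_add, hx, hy]
  -- the key identity: s * (1 ⊗ α) = Δ α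
  have hStar : s * ((1 : R) ⊗ₜ[k] A) = Δ A := by
    have := congrArg G h1
    rw [hR s] at this
    rw [hM s s] at this
    rw [← hA] at this
    exact this
  -- B pulls out right multiplication
  have hBmul : ∀ (x : R ⊗[k] R) (r : R), B (x * ((1 : R) ⊗ₜ[k] r)) = B x * r := by
    intro x r
    induction x using TensorProduct.induction_on with
    | zero => simp
    | tmul a b =>
        have h : (a ⊗ₜ[k] b) * ((1 : R) ⊗ₜ[k] r) = (a * 1) ⊗ₜ[k] (b * r) := by
          simp [Algebra.TensorProduct.tmul_mul_tmul]
        rw [h]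
        simp [hB, mul_assoc]
    | add x y hx hy => rw [add_mul, map_add, hx, hy, map_add, add_mul]
  -- B (Δ A) = algebraMap k R (ε A)
  have hBcomul : B (Δ A) = algebraMap k R (ε A) := by
    have h := HopfAlgebra.mul_antipode_rTensor_comul_apply (R := k) (A := R) A
    have hrt : Si.rTensor R (Δ A) = TensorProduct.map Si (LinearMap.id : R →ₗ[k] R) (Δ A) := rfl
    rw [hrt] at h
    simpa [hB] using h
  -- ε A = 1
  have hεA : ε A = 1 := by
    have hswap : ∀ u : R ⊗[k] R,
        ε (TensorProduct.rid k R (TensorProduct.map (LinearMap.id : R →ₗ[k] R) ε u))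
          = ε (TensorProduct.lid k R (TensorProduct.map ε (LinearMap.id : R →ₗ[k] R) u)) := by
      intro u
      induction u using TensorProduct.induction_on with
      | zero => simp
      | tmul a b => simp [smul_eq_mul, mul_comm]
      | add x y hx hy => simp only [map_add, hx, hy]
    rw [hA, hswap s, h2]
    exact Bialgebra.counit_one (R := k) (A := R)
  -- β α = 1
  have hβα : B s * A = 1 := by
    rw [← hBmul s A, hStar, hBcomul, hεA, map_one]
  -- α ≠ 0
  have hA0 : A ≠ 0 := by
    intro h
    rw [h, mul_zero] at hβα
    exact zero_ne_one hβα
  -- α β = 1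
  have hαβ : A * B s = 1 := by
    have : (A * B s) * A = 1 * A := by
      rw [mul_assoc, hβα, mul_one, one_mul]
    exact mul_right_cancel₀ hA0 this
  exact ⟨hαβ, hβα⟩
end

section
/- Let k be a field and let R be a Hopf k-algebra such that R⊗_k R is a domain. Suppose s = ∑s₁⊗s₂ and t = ∑t₁⊗t₂ in R⊗_k R satisfy (I⊗Δ)(s)·(1⊗s) = (Δ⊗I)(s), (I⊗Δ)(s)·(1⊗t) = (Δ⊗I)(t)·(s⊗1), ∑ε(s₁)s₂ = 1 and ∑t₁ε(t₂) = 1. Then α := ∑s₁ε(s₂) is a unit of R and 1⊗α^{-1} = Δ(α^{-1})·s in R⊗_k R. -/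
set_option maxRecDepth 4000
set_option synthInstance.maxHeartbeats 400000


open scoped TensorProduct

section Aux

open TensorProduct Coalgebra

variable {k R : Type*} [Field k] [Ring R] [HopfAlgebra k R]

/-- `a ⊗ b ↦ ε(b) • a`. -/
noncomputable def stmt9Q : R ⊗[k] R →ₗ[k] R :=
  (TensorProduct.rid k R).toLinearMap ∘ₗ
    TensorProduct.map (LinearMap.id : R →ₗ[k] R) (Coalgebra.counit (R := k))

lemma stmt9Q_tmul (a b : R) :
    stmt9Q (a ⊗ₜ[k] b) = Coalgebra.counit (R := k) b • a := by
  simp [stmt9Q]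

lemma stmt9Q_one : stmt9Q (1 : R ⊗[k] R) = 1 := by
  rw [Algebra.TensorProduct.one_def, stmt9Q_tmul]
  simp

lemma stmt9Q_mul (x y : R ⊗[k] R) : stmt9Q (x * y) = stmt9Q x * stmt9Q y := by
  induction x using TensorProduct.induction_on with
  | zero => simp
  | add x₁ x₂ ih₁ ih₂ => simp [add_mul, ih₁, ih₂]
  | tmul a b =>
    induction y using TensorProduct.induction_on with
    | zero => simp
    | add y₁ y₂ ih₁ ih₂ => simp [mul_add, ih₁, ih₂]
    | tmul p q =>
      rw [Algebra.TensorProduct.tmul_mul_tmul, stmt9Q_tmul, stmt9Q_tmul, stmt9Q_tmul,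
        Bialgebra.counit_mul, smul_mul_smul_comm]

/-- `a ⊗ c ↦ S(a) * c`. -/
noncomputable def stmt9phi : R ⊗[k] R →ₗ[k] R :=
  LinearMap.mul' k R ∘ₗ
    (HopfAlgebra.antipode (R := k) (A := R)).rTensor R

lemma stmt9phi_tmul (a c : R) :
    stmt9phi (a ⊗ₜ[k] c) = HopfAlgebra.antipode (R := k) a * c := by
  simp [stmt9phi]

/-- `(a ⊗ c) ⊗ d ↦ (S(a)*c) ⊗ d`. -/
noncomputable def stmt9G : (R ⊗[k] R) ⊗[k] R →ₗ[k] R ⊗[k] R :=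
  (stmt9phi : R ⊗[k] R →ₗ[k] R).rTensor R

/-- `a ⊗ (c ⊗ d) ↦ (S(a)*c) ⊗ d`. -/
noncomputable def stmt9H : R ⊗[k] (R ⊗[k] R) →ₗ[k] R ⊗[k] R :=
  stmt9G ∘ₗ (TensorProduct.assoc k R R R).symm.toLinearMap

lemma stmt9H_tmul (a c d : R) :
    stmt9H (a ⊗ₜ[k] (c ⊗ₜ[k] d)) =
      (HopfAlgebra.antipode (R := k) a * c) ⊗ₜ[k] d := by
  simp [stmt9H, stmt9G, stmt9phi_tmul]

lemma stmt9_key1 (X : R ⊗[k] (R ⊗[k] R)) (y : R ⊗[k] R) :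
    stmt9G ((TensorProduct.assoc k R R R).symm (X * ((1 : R) ⊗ₜ[k] y)))
      = stmt9H X * y := by
  induction X using TensorProduct.induction_on with
  | zero => simp
  | add X₁ X₂ ih₁ ih₂ => simp only [add_mul, map_add, ih₁, ih₂]
  | tmul a u =>
    induction u using TensorProduct.induction_on with
    | zero => simp
    | add u₁ u₂ ih₁ ih₂ =>
      simp only [TensorProduct.tmul_add, add_mul, map_add, ih₁, ih₂]
    | tmul c d =>
      induction y using TensorProduct.induction_on with
      | zero => simp
      | add y₁ y₂ ih₁ ih₂ =>
        simp only [TensorProduct.tmul_add, mul_add, map_add, ih₁, ih₂]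
      | tmul p q =>
        simp only [Algebra.TensorProduct.tmul_mul_tmul, one_mul,
          TensorProduct.assoc_symm_tmul, stmt9G, LinearMap.rTensor_tmul,
          stmt9phi_tmul, stmt9H_tmul, mul_one, mul_assoc]

/-- `(a ⊗ c) ⊗ d ↦ ε(d) • (a ⊗ c)`. -/
noncomputable def stmt9K : (R ⊗[k] R) ⊗[k] R →ₗ[k] R ⊗[k] R :=
  (TensorProduct.rid k (R ⊗[k] R)).toLinearMap ∘ₗ
    LinearMap.lTensor (R ⊗[k] R) (Coalgebra.counit (R := k) (A := R))

lemma stmt9K_tmul (x : R ⊗[k] R) (d : R) :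
    stmt9K (x ⊗ₜ[k] d) = Coalgebra.counit (R := k) d • x := by
  simp [stmt9K]

lemma stmt9_key2 (X : R ⊗[k] (R ⊗[k] R)) (y : R ⊗[k] R) :
    stmt9K ((TensorProduct.assoc k R R R).symm (X * ((1 : R) ⊗ₜ[k] y)))
      = (LinearMap.lTensor R (stmt9Q : R ⊗[k] R →ₗ[k] R)) X
          * ((1 : R) ⊗ₜ[k] stmt9Q y) := by
  induction X using TensorProduct.induction_on with
  | zero => simp
  | add X₁ X₂ ih₁ ih₂ => simp only [add_mul, map_add, ih₁, ih₂]
  | tmul a u =>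
    induction u using TensorProduct.induction_on with
    | zero => simp
    | add u₁ u₂ ih₁ ih₂ =>
      simp only [TensorProduct.tmul_add, add_mul, map_add, ih₁, ih₂]
    | tmul c d =>
      induction y using TensorProduct.induction_on with
      | zero => simp
      | add y₁ y₂ ih₁ ih₂ =>
        simp only [TensorProduct.tmul_add, mul_add, map_add, ih₁, ih₂]
      | tmul p q =>
        simp only [Algebra.TensorProduct.tmul_mul_tmul, one_mul,
          TensorProduct.assoc_symm_tmul, stmt9K_tmul, LinearMap.lTensor_tmul,
          stmt9Q_tmul, Bialgebra.counit_mul, mul_one, smul_mul_smul_comm,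
          TensorProduct.tmul_smul]

end Aux

/-- Let `R` be a Hopf `k`-algebra with `R ⊗ₖ R` a domain, and let `s, t ∈ R ⊗ₖ R` satisfy
`(I⊗Δ)(s)·(1⊗s) = (Δ⊗I)(s)`, `(I⊗Δ)(s)·(1⊗t) = (Δ⊗I)(t)·(s⊗1)`, `∑ ε(s₁)s₂ = 1` and
`∑ t₁ε(t₂) = 1`.  Then `α := ∑ s₁ε(s₂)` is a unit of `R` and
`1 ⊗ α⁻¹ = Δ(α⁻¹) · s` in `R ⊗ₖ R`. -/
theorem stmt9 {k R : Type*} [Field k] [Ring R] [HopfAlgebra k R] [IsDomain (R ⊗[k] R)]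
    (s t : R ⊗[k] R)
    (h1 : (TensorProduct.assoc k R R R).symm
        (TensorProduct.map (LinearMap.id : R →ₗ[k] R) (Coalgebra.comul (R := k)) s
          * ((1 : R) ⊗ₜ[k] s))
      = TensorProduct.map (Coalgebra.comul (R := k)) (LinearMap.id : R →ₗ[k] R) s)
    (h2 : (TensorProduct.assoc k R R R).symm
        (TensorProduct.map (LinearMap.id : R →ₗ[k] R) (Coalgebra.comul (R := k)) s
          * ((1 : R) ⊗ₜ[k] t))
      = TensorProduct.map (Coalgebra.comul (R := k)) (LinearMap.id : R →ₗ[k] R) t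
          * (s ⊗ₜ[k] (1 : R)))
    (h3 : TensorProduct.lid k R
        (TensorProduct.map (Coalgebra.counit (R := k)) (LinearMap.id : R →ₗ[k] R) s) = 1)
    (h4 : TensorProduct.rid k R
        (TensorProduct.map (LinearMap.id : R →ₗ[k] R) (Coalgebra.counit (R := k)) t) = 1) :
    ∃ αi : R,
      TensorProduct.rid k R
          (TensorProduct.map (LinearMap.id : R →ₗ[k] R) (Coalgebra.counit (R := k)) s)
        * αi = 1 ∧
      αi * TensorProduct.rid k R
          (TensorProduct.map (LinearMap.id : R →ₗ[k] R) (Coalgebra.counit (R := k)) s)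
        = 1 ∧
      (1 : R) ⊗ₜ[k] αi = Coalgebra.comul αi * s := by
  classical
  -- α and v
  set α : R := stmt9Q s with hα
  have hαdef : TensorProduct.rid k R
      (TensorProduct.map (LinearMap.id : R →ₗ[k] R) (Coalgebra.counit (R := k)) s) = α := rfl
  set v : R ⊗[k] R :=
    stmt9H (TensorProduct.map (LinearMap.id : R →ₗ[k] R) (Coalgebra.comul (R := k)) s)
    with hv
  -- h3 rephrased
  have h3' : TensorProduct.map (Coalgebra.counit (R := k)) (LinearMap.id : R →ₗ[k] R) s
      = (1 : k) ⊗ₜ[k] (1 : R) := by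
    apply (TensorProduct.lid k R).injective
    simpa using h3
  -- Step A : v * s = 1
  have hvs : v * s = 1 := by
    have := congrArg (stmt9G (k := k) (R := R)) h1
    rw [stmt9_key1] at this
    rw [← hv] at this
    rw [this]
    -- stmt9G (map comul id s) = 1
    have hcomp : (stmt9G (k := k) (R := R)) ∘ₗ
        (TensorProduct.map (Coalgebra.comul (R := k)) (LinearMap.id : R →ₗ[k] R))
        = (LinearMap.rTensor R (Algebra.linearMap k R)) ∘ₗ
          (TensorProduct.map (Coalgebra.counit (R := k)) (LinearMap.id : R →ₗ[k] R)) := by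
      apply TensorProduct.ext'
      intro a b
      simp [stmt9G, stmt9phi]
    have := congrArg (fun f : R ⊗[k] R →ₗ[k] R ⊗[k] R => f s) hcomp
    simp only [LinearMap.comp_apply] at this
    rw [this, h3']
    simp [Algebra.TensorProduct.one_def]
  -- s ≠ 0
  have hs0 : s ≠ 0 := by
    intro h
    rw [h, mul_zero] at hvs
    exact zero_ne_one hvs
  -- Step C : s * v = 1
  have hsv : s * v = 1 := by
    have : (s * v) * s = 1 * s := by
      rw [mul_assoc, hvs, mul_one, one_mul]
    exact mul_right_cancel₀ hs0 this
  -- Step B : s * (1 ⊗ α) = comul α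
  have hstar : s * ((1 : R) ⊗ₜ[k] α) = Coalgebra.comul (R := k) α := by
    have := congrArg (stmt9K (k := k) (R := R)) h1
    rw [stmt9_key2] at this
    -- LHS : P (map id comul s) = s
    have hP : (LinearMap.lTensor R (stmt9Q (k := k) (R := R))) ∘ₗ
        (TensorProduct.map (LinearMap.id : R →ₗ[k] R) (Coalgebra.comul (R := k)))
        = LinearMap.id := by
      apply TensorProduct.ext'
      intro a b
      have hb : stmt9Q (Coalgebra.comul (R := k) b) = b := by
        have h := Coalgebra.lTensor_counit_comul (R := k) b
        have : stmt9Q (Coalgebra.comul (R := k) b)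
            = (TensorProduct.rid k R) ((Coalgebra.counit (R := k)).lTensor R
              (Coalgebra.comul (R := k) b)) := rfl
        rw [this, h]
        simp
      simp [LinearMap.lTensor_tmul, hb]
    have hPs := congrArg (fun f : R ⊗[k] R →ₗ[k] R ⊗[k] R => f s) hP
    simp only [LinearMap.comp_apply, LinearMap.id_apply] at hPs
    rw [hPs] at this
    -- RHS : K (map comul id s) = comul α
    have hK : (stmt9K (k := k) (R := R)) ∘ₗ
        (TensorProduct.map (Coalgebra.comul (R := k)) (LinearMap.id : R →ₗ[k] R))
        = (Coalgebra.comul (R := k)) ∘ₗ (stmt9Q (k := k) (R := R)) := by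
      apply TensorProduct.ext'
      intro a b
      simp [stmt9K_tmul, stmt9Q_tmul, map_smul]
    have hKs := congrArg (fun f : R ⊗[k] R →ₗ[k] R ⊗[k] R => f s) hK
    simp only [LinearMap.comp_apply] at hKs
    rw [hKs] at this
    rw [hα]
    exact this
  -- the inverse
  refine ⟨stmt9Q v, ?_, ?_, ?_⟩
  · rw [hαdef, ← stmt9Q_mul, hsv, stmt9Q_one]
  · rw [hαdef, ← stmt9Q_mul, hvs, stmt9Q_one]
  · -- 1 ⊗ αi = comul αi * s
    have hαinv : α * stmt9Q v = 1 := by rw [← stmt9Q_mul, hsv, stmt9Q_one]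
    have hαinv' : stmt9Q v * α = 1 := by rw [← stmt9Q_mul, hvs, stmt9Q_one]
    have hone : ((1 : R) ⊗ₜ[k] α) * ((1 : R) ⊗ₜ[k] stmt9Q v) = 1 := by
      rw [Algebra.TensorProduct.tmul_mul_tmul, mul_one, hαinv,
        Algebra.TensorProduct.one_def]
    calc (1 : R) ⊗ₜ[k] stmt9Q v
        = (1 : R ⊗[k] R) * ((1 : R) ⊗ₜ[k] stmt9Q v) := by rw [one_mul]
      _ = Coalgebra.comul (R := k) (stmt9Q v * α) * ((1 : R) ⊗ₜ[k] stmt9Q v) := by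
          rw [hαinv']; simp
      _ = Coalgebra.comul (R := k) (stmt9Q v) * Coalgebra.comul (R := k) α
            * ((1 : R) ⊗ₜ[k] stmt9Q v) := by rw [Bialgebra.comul_mul]
      _ = Coalgebra.comul (R := k) (stmt9Q v) * (s * ((1 : R) ⊗ₜ[k] α))
            * ((1 : R) ⊗ₜ[k] stmt9Q v) := by rw [hstar]
      _ = Coalgebra.comul (R := k) (stmt9Q v) * s
            * (((1 : R) ⊗ₜ[k] α) * ((1 : R) ⊗ₜ[k] stmt9Q v)) := by
          rw [mul_assoc, mul_assoc, mul_assoc]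
      _ = Coalgebra.comul (R := k) (stmt9Q v) * s := by rw [hone, mul_one]
end

section
/- Let k be a field, let R be a Hopf k-algebra that is a domain, and suppose the Ore extension T=R[x;σ,δ] is a Hopf algebra containing R as a Hopf subalgebra, with ε(x)=0 and Δ(x) = s(1⊗x) + t(x⊗1) + v(x⊗x) + w for s,t,v,w ∈ R⊗_k R, where v = ∑v₁⊗v₂. If the antipode of T satisfies S(x) = ax + b with a,b ∈ R and a a unit of R, then ∑S(v₁)v₂ = 0 in R and ∑ε(v₁)ε(v₂) = 0 in k. -/
/-!
Apply `m ∘ (S ⊗ id)` to `Δ(x)`. By the antipode axiom and `ε(x) = 0` the result is `0`; on the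
other hand, since `S` is an antimultiplicative map extending the antipode of `R`, each summand
of `Δ(x)` contributes `S(y) · c(u) · z` where `c(u) = ∑ S(u₁)u₂`, so that
`c(s)x + S(x)c(t) + S(x)c(v)x + c(w) = 0`. Substituting `S(x) = ax + b` and commuting `x` past
`R` with the Ore relation gives a quadratic polynomial in `x` with leading coefficient
`a σ(c(v))`; freeness of `T` over `R` forces it to vanish, hence `c(v) = 0` as `a` is a unit and
`σ` is bijective. Finally `∑ ε(v₁)ε(v₂) = ε(c(v))` because `ε ∘ S = ε`.
-/

open scoped TensorProduct

open TensorProduct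

section Antimultiplicative

variable {k A : Type*} [CommSemiring k] [Semiring A] [Algebra k A]

lemma mul'_map_mul_tmul_of_antimultiplicative (S : A →ₗ[k] A)
    (hS : ∀ y z : A, S (y * z) = S z * S y) (u : A ⊗[k] A) (y z : A) :
    LinearMap.mul' k A (map S LinearMap.id (u * (y ⊗ₜ[k] z)))
      = S y * LinearMap.mul' k A (map S LinearMap.id u) * z := by
  induction u using TensorProduct.induction_on with
  | zero => simp
  | tmul p q =>
    simp only [Algebra.TensorProduct.tmul_mul_tmul, map_tmul, LinearMap.id_coe, id_eq,
      LinearMap.mul'_apply, hS, mul_assoc]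
  | add u u' hu hu' => rw [add_mul, map_add, map_add, hu, hu', map_add, map_add, mul_add, add_mul]

end Antimultiplicative

lemma HopfAlgebra.counit_mul'_map_antipode {k A : Type*} [CommSemiring k] [Semiring A]
    [HopfAlgebra k A] (u : A ⊗[k] A) :
    Coalgebra.counit (R := k) (LinearMap.mul' k A (map (antipode k) LinearMap.id u))
      = TensorProduct.lid k k (map (Coalgebra.counit (R := k)) (Coalgebra.counit (R := k)) u) := by
  induction u using TensorProduct.induction_on with
  | zero => simp
  | tmul p q => simp
  | add u u' hu hu' => rw [map_add, map_add, map_add, hu, hu', map_add, map_add]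

namespace HopfAlgebraStructure

variable {k T : Type*} [Field k] [Ring T] [Algebra k T]

@[reducible] noncomputable def toHopfAlgebra (H : HopfAlgebraStructure k T) :
    HopfAlgebra k T :=
  letI : Coalgebra k T :=
    { comul := H.comul
      counit := H.counit
      coassoc := LinearMap.ext fun t => by
        simp only [LinearMap.comp_apply, LinearEquiv.coe_coe, LinearMap.rTensor, LinearMap.lTensor,
          H.coassoc t, LinearEquiv.apply_symm_apply]
      rTensor_counit_comp_comul := LinearMap.ext fun t => by
        simpa [LinearMap.rTensor] using congrArg (TensorProduct.lid k T).symm (H.counit_comul t)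
      lTensor_counit_comp_comul := LinearMap.ext fun t => by
        simpa [LinearMap.lTensor] using congrArg (TensorProduct.rid k T).symm (H.comul_counit t) }
  letI : Bialgebra k T := Bialgebra.mk' k T H.counit_one (H.counit_mul _ _) H.comul_one
    (H.comul_mul _ _)
  { antipode := H.antipode
    mul_antipode_rTensor_comul := LinearMap.ext H.antipode_mul_id
    mul_antipode_lTensor_comul := LinearMap.ext H.id_mul_antipode }

lemma antipode_mul (H : HopfAlgebraStructure k T) (y z : T) :
    H.antipode (y * z) = H.antipode z * H.antipode y :=
  letI := H.toHopfAlgebra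
  HopfAlgebra.antipode_mul_antidistrib y z

end HopfAlgebraStructure

namespace IsOreExtension

variable {k R T : Type*} [Field k] [Ring R] [Algebra k R] [Ring T] [Algebra k T]
  {σ : R ≃ₐ[k] R} {δ : R →ₗ[k] R} {ι : R →ₐ[k] T} {x : T}

lemma eq_zero_of_sum_eq_zero (hT : IsOreExtension k σ δ ι x) {f : ℕ →₀ R}
    (hf : (f.sum fun i r => ι r * x ^ i) = 0) : f = 0 :=
  (hT.free 0).unique hf.symm (by simp)

lemma coeff_two_eq_zero (hT : IsOreExtension k σ δ ι x) {p q r : R}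
    (h : ι p + ι q * x + ι r * x ^ 2 = 0) : r = 0 := by
  set f : ℕ →₀ R := Finsupp.single 0 p + Finsupp.single 1 q + Finsupp.single 2 r
  have hf : (f.sum fun i r => ι r * x ^ i) = 0 := by
    rw [← h, Finsupp.sum_add_index' (by simp) (by simp [add_mul]),
      Finsupp.sum_add_index' (by simp) (by simp [add_mul])]
    simp
  simpa [f] using DFunLike.congr_fun (hT.eq_zero_of_sum_eq_zero hf) 2

lemma add_mul_map (hT : IsOreExtension k σ δ ι x) (a b r : R) :
    (ι a * x + ι b) * ι r = ι (a * σ r) * x + ι (a * δ r + b * r) := by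
  rw [add_mul, mul_assoc, hT.rel, mul_add, ← mul_assoc]
  simp only [map_mul, map_add, add_assoc]

lemma mul_sigma_eq_zero (hT : IsOreExtension k σ δ ι x) {a b s t v w : R}
    (h : ι s * x + (ι a * x + ι b) * ι t + (ι a * x + ι b) * ι v * x + ι w = 0) :
    a * σ v = 0 := by
  rw [hT.add_mul_map, hT.add_mul_map] at h
  refine hT.coeff_two_eq_zero (p := a * δ t + b * t + w) (q := s + a * σ t + a * δ v + b * v) ?_
  rw [← h]
  simp only [map_add, add_mul, mul_assoc, pow_two]
  abel

end IsOreExtension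

section ExtendsHopf

variable {k R T : Type*} [Field k] [Ring R] [HopfAlgebra k R] [Ring T] [Algebra k T]
  {ι : R →ₐ[k] T} {H : HopfAlgebraStructure k T}

lemma ExtendsHopf.antipode_one (hH : ExtendsHopf k ι H) : H.antipode 1 = 1 := by
  simpa using hH.2.2 1

lemma ExtendsHopf.mul'_map_antipode_map (hH : ExtendsHopf k ι H) (u : R ⊗[k] R) :
    LinearMap.mul' k T (map H.antipode LinearMap.id (map ι.toLinearMap ι.toLinearMap u))
      = ι (LinearMap.mul' k R (map (HopfAlgebra.antipode k) LinearMap.id u)) := by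
  induction u using TensorProduct.induction_on with
  | zero => simp
  | tmul p q => simp [hH.2.2]
  | add u u' hu hu' => simp only [map_add, hu, hu']

end ExtendsHopf

theorem stmt14_general {k R T : Type*} [Field k] [Ring R] [HopfAlgebra k R]
    [Ring T] [Algebra k T]
    (σ : R ≃ₐ[k] R) (δ : R →ₗ[k] R) (ι : R →ₐ[k] T) (x : T)
    (hT : IsOreExtension k σ δ ι x)
    (H : HopfAlgebraStructure k T) (hH : ExtendsHopf k ι H)
    (hε : H.counit x = 0)
    (s t v w : R ⊗[k] R)
    (hx : H.comul x
        = TensorProduct.map ι.toLinearMap ι.toLinearMap s * ((1 : T) ⊗ₜ[k] x)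
          + TensorProduct.map ι.toLinearMap ι.toLinearMap t * (x ⊗ₜ[k] (1 : T))
          + TensorProduct.map ι.toLinearMap ι.toLinearMap v * (x ⊗ₜ[k] x)
          + TensorProduct.map ι.toLinearMap ι.toLinearMap w)
    (a b : R) (ha : IsUnit a)
    (hS : H.antipode x = ι a * x + ι b) :
    LinearMap.mul' k R
        (TensorProduct.map (HopfAlgebra.antipode (R := k)) (LinearMap.id : R →ₗ[k] R) v)
      = 0 ∧
    TensorProduct.lid k k
        (TensorProduct.map (Coalgebra.counit (R := k)) (Coalgebra.counit (R := k)) v)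
      = 0 := by
  set c : R ⊗[k] R →ₗ[k] R :=
    LinearMap.mul' k R ∘ₗ map (HopfAlgebra.antipode k) LinearMap.id
  have hΦ (u : R ⊗[k] R) (y z : T) :
      LinearMap.mul' k T (map H.antipode LinearMap.id
        (map ι.toLinearMap ι.toLinearMap u * (y ⊗ₜ[k] z))) = H.antipode y * ι (c u) * z := by
    rw [mul'_map_mul_tmul_of_antimultiplicative _ H.antipode_mul, hH.mul'_map_antipode_map]
    rfl
  have hcomul : ι (c s) * x + (ι a * x + ι b) * ι (c t) + (ι a * x + ι b) * ι (c v) * x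
      + ι (c w) = 0 := by
    have h := H.antipode_mul_id x
    rw [hε, map_zero, hx] at h
    simp only [map_add, hΦ, hH.mul'_map_antipode_map, hH.antipode_one, hS, one_mul, mul_one] at h
    exact h
  have hcv : c v = 0 :=
    (map_eq_zero_iff σ σ.injective).mp (ha.mul_right_eq_zero.mp (hT.mul_sigma_eq_zero hcomul))
  refine ⟨hcv, ?_⟩
  rw [← HopfAlgebra.counit_mul'_map_antipode]
  exact (congrArg _ hcv).trans (map_zero _)

/-- Let `R` be a Hopf `k`-algebra that is a domain and suppose the Ore extension
`T = R[x; σ, δ]` is a Hopf algebra containing `R` as a Hopf subalgebra, with `ε(x) = 0` and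
`Δ(x) = s(1⊗x) + t(x⊗1) + v(x⊗x) + w`.  If the antipode of `T` satisfies `S(x) = ax + b`
with `a, b ∈ R` and `a` a unit of `R`, then `∑ S(v₁)v₂ = 0` in `R` and
`∑ ε(v₁)ε(v₂) = 0` in `k`. -/
theorem stmt14 {k R T : Type*} [Field k] [Ring R] [HopfAlgebra k R] [IsDomain R]
    [Ring T] [Algebra k T]
    (σ : R ≃ₐ[k] R) (δ : R →ₗ[k] R) (ι : R →ₐ[k] T) (x : T)
    (hT : IsOreExtension k σ δ ι x)
    (H : HopfAlgebraStructure k T) (hH : ExtendsHopf k ι H)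
    (hε : H.counit x = 0)
    (s t v w : R ⊗[k] R)
    (hx : H.comul x
        = TensorProduct.map ι.toLinearMap ι.toLinearMap s * ((1 : T) ⊗ₜ[k] x)
          + TensorProduct.map ι.toLinearMap ι.toLinearMap t * (x ⊗ₜ[k] (1 : T))
          + TensorProduct.map ι.toLinearMap ι.toLinearMap v * (x ⊗ₜ[k] x)
          + TensorProduct.map ι.toLinearMap ι.toLinearMap w)
    (a b : R) (ha : IsUnit a)
    (hS : H.antipode x = ι a * x + ι b) :
    LinearMap.mul' k R
        (TensorProduct.map (HopfAlgebra.antipode (R := k)) (LinearMap.id : R →ₗ[k] R) v)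
      = 0 ∧
    TensorProduct.lid k k
        (TensorProduct.map (Coalgebra.counit (R := k)) (Coalgebra.counit (R := k)) v)
      = 0 :=
  stmt14_general σ δ ι x hT H hH hε s t v w hx a b ha hS
end

section
/- Let k be a field, let R be a Hopf k-algebra, and suppose the Ore extension T=R[x;σ,δ] is a Hopf algebra containing R as a Hopf subalgebra with ε(x)=0 and Δ(x) = 1⊗x + x⊗β + w for some β ∈ R and w ∈ R⊗_k R. Then comparing the coefficient of x⊗1⊗1 in the coassociativity identity (Δ⊗I)(Δ(x)) = (I⊗Δ)(Δ(x)) yields Δ(β) = β⊗β; together with ε(β)=1 this shows β is a grouplike element of R, and in particular β is invertible in R with β^{-1} = S(β). -/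
open scoped TensorProduct

section Aux

variable {k R T : Type*} [Field k] [Ring R] [Algebra k R] [Ring T] [Algebra k T]

theorem ore_coeff (σ : R ≃ₐ[k] R) (δ : R →ₗ[k] R) (ι : R →ₐ[k] T) (x : T)
    (hT : IsOreExtension k σ δ ι x) :
    ∃ C0 C1 : T →ₗ[k] R, (∀ r : R, C0 (ι r) = r) ∧ (∀ r : R, C1 (ι r) = 0) ∧
      C0 x = 0 ∧ C1 x = 1 := by
  classical
  have hzero : ∀ i : ℕ, ι (0 : R) * x ^ i = 0 := by intro i; simp
  have hrep : ∀ t : T, t = ((hT.free t).choose).sum fun i r => ι r * x ^ i :=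
    fun t => (hT.free t).choose_spec.1
  have huniq : ∀ (t : T) (a : ℕ →₀ R), t = a.sum (fun i r => ι r * x ^ i) →
      a = (hT.free t).choose := fun t a ha => (hT.free t).choose_spec.2 a ha
  have hadd : ∀ t s : T,
      (hT.free (t + s)).choose = (hT.free t).choose + (hT.free s).choose := by
    intro t s
    refine ((huniq _ _ ?_)).symm
    rw [Finsupp.sum_add_index' hzero (by intro i b1 b2; rw [map_add, add_mul])]
    exact congrArg₂ (· + ·) (hrep t) (hrep s)
  have hsmul : ∀ (c : k) (t : T),
      (hT.free (c • t)).choose = c • (hT.free t).choose := by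
    intro c t
    refine ((huniq _ _ ?_)).symm
    rw [Finsupp.sum_smul_index' (fun i => hzero i)]
    have : ((hT.free t).choose).sum (fun i r => ι (c • r) * x ^ i)
        = c • ((hT.free t).choose).sum fun i r => ι r * x ^ i := by
      rw [Finsupp.smul_sum]
      refine Finsupp.sum_congr fun i _ => ?_
      rw [map_smul, smul_mul_assoc]
    rw [this, ← hrep t]
  set C : ℕ → (T →ₗ[k] R) := fun i =>
    { toFun := fun t => (hT.free t).choose i
      map_add' := fun t s =>
        show (hT.free (t + s)).choose i = (hT.free t).choose i + (hT.free s).choose i by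
          rw [hadd]; simp
      map_smul' := fun c t =>
        show (hT.free (c • t)).choose i = c • (hT.free t).choose i by
          rw [hsmul]; simp } with hC
  have hιr : ∀ r : R, (hT.free (ι r)).choose = Finsupp.single 0 r := by
    intro r
    refine (huniq _ _ ?_).symm
    rw [Finsupp.sum_single_index (hzero 0)]
    simp
  have hx : (hT.free x).choose = Finsupp.single 1 1 := by
    refine (huniq _ _ ?_).symm
    rw [Finsupp.sum_single_index (hzero 1)]
    simp
  refine ⟨C 0, C 1, fun r => ?_, fun r => ?_, ?_, ?_⟩
  · show (hT.free (ι r)).choose 0 = r; rw [hιr]; simp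
  · show (hT.free (ι r)).choose 1 = 0; rw [hιr]; simp
  · show (hT.free x).choose 0 = 0; rw [hx]; simp
  · show (hT.free x).choose 1 = 1; rw [hx]; simp

end Aux

/-- Let `R` be a Hopf `k`-algebra and suppose the Ore extension `T = R[x; σ, δ]` is a Hopf
algebra containing `R` as a Hopf subalgebra with `ε(x) = 0` and
`Δ(x) = 1 ⊗ x + x ⊗ β + w` for some `β ∈ R` and `w ∈ R ⊗ₖ R`.  Then `Δ(β) = β ⊗ β` and
`ε(β) = 1`, so `β` is a grouplike element of `R`; in particular `β` is invertible in `R`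
with `β⁻¹ = S(β)`. -/

theorem stmt15 {k R T : Type*} [Field k] [Ring R] [HopfAlgebra k R] [Ring T] [Algebra k T]
    (σ : R ≃ₐ[k] R) (δ : R →ₗ[k] R) (ι : R →ₐ[k] T) (x : T)
    (hT : IsOreExtension k σ δ ι x)
    (H : HopfAlgebraStructure k T) (hH : ExtendsHopf k ι H)
    (hε : H.counit x = 0)
    (β : R) (w : R ⊗[k] R)
    (hx : H.comul x
        = (1 : T) ⊗ₜ[k] x + x ⊗ₜ[k] ι β
          + TensorProduct.map ι.toLinearMap ι.toLinearMap w) :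
    Coalgebra.comul β = β ⊗ₜ[k] β ∧
    Coalgebra.counit (R := k) β = 1 ∧
    β * HopfAlgebra.antipode (R := k) β = 1 ∧
    HopfAlgebra.antipode (R := k) β * β = 1 := by
  classical
  obtain ⟨C0, C1, hC0ι, hC1ι, hC0x, hC1x⟩ := ore_coeff σ δ ι x hT
  obtain ⟨hεR, hΔR, hSR⟩ := hH
  have hC0comp : C0 ∘ₗ ι.toLinearMap = LinearMap.id := LinearMap.ext hC0ι
  have hC1comp : C1 ∘ₗ ι.toLinearMap = (0 : R →ₗ[k] R) := LinearMap.ext hC1ι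
  have hC1one : C1 (1 : T) = 0 := by simpa using hC1ι 1
  have hC0one : C0 (1 : T) = 1 := by simpa using hC0ι 1
  have hkill : ∀ v : R ⊗[k] R,
      TensorProduct.map C1 C0 (TensorProduct.map ι.toLinearMap ι.toLinearMap v) = 0 := by
    intro v
    rw [← LinearMap.comp_apply, ← TensorProduct.map_comp, hC1comp,
      TensorProduct.map_zero_left, LinearMap.zero_apply]
  have hkill' : ∀ v : R ⊗[k] R,
      TensorProduct.map C0 C0 (TensorProduct.map ι.toLinearMap ι.toLinearMap v) = v := by
    intro v
    rw [← LinearMap.comp_apply, ← TensorProduct.map_comp, hC0comp,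
      TensorProduct.map_id, LinearMap.id_apply]
  -- counit of β is 1
  have hε1 : Coalgebra.counit (R := k) β = 1 := by
    have h := H.comul_counit x
    rw [hx] at h
    have hw : TensorProduct.map LinearMap.id H.counit
        (TensorProduct.map ι.toLinearMap ι.toLinearMap w)
        = TensorProduct.map ι.toLinearMap (H.counit ∘ₗ ι.toLinearMap) w := by
      rw [← LinearMap.comp_apply, ← TensorProduct.map_comp, LinearMap.id_comp]
    have hrid : ∀ v : R ⊗[k] R, TensorProduct.rid k T
        (TensorProduct.map ι.toLinearMap (H.counit ∘ₗ ι.toLinearMap) v)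
        = ι (TensorProduct.rid k R
            (TensorProduct.map LinearMap.id (Coalgebra.counit (R := k)) v)) := by
      intro v
      induction v using TensorProduct.induction_on with
      | zero => simp
      | tmul a b =>
          simp [TensorProduct.rid_tmul, hεR, map_smul]
      | add u v hu hv => simp only [map_add, hu, hv]
    simp only [map_add, TensorProduct.map_tmul, LinearMap.id_apply, hw, hrid w,
      TensorProduct.rid_tmul, hε, hεR, zero_smul, zero_add] at h
    have h1 := congrArg C1 h
    simp only [map_add, map_smul, hC1ι, hC1x, add_zero, smul_eq_mul] at h1
    have h2 := congrArg (fun r : R => Coalgebra.counit (R := k) r) h1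
    simpa [map_smul, Bialgebra.counit_one, smul_eq_mul] using h2
  -- comul of β is β ⊗ β
  have hΔβ : Coalgebra.comul (R := k) β = β ⊗ₜ[k] β := by
    have h := H.coassoc x
    rw [hx] at h
    have hmcx : TensorProduct.map C1 C0 (H.comul x) = (1 : R) ⊗ₜ[k] β := by
      rw [hx]
      simp [TensorProduct.map_tmul, hC1one, hC0x, hC1x, hC0ι, hkill w]
    have hkillΔL : TensorProduct.map (TensorProduct.map C1 C0) C0
        (TensorProduct.map H.comul LinearMap.id
          (TensorProduct.map ι.toLinearMap ι.toLinearMap w)) = 0 := by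
      rw [← LinearMap.comp_apply, ← TensorProduct.map_comp,
        ← LinearMap.comp_apply, ← TensorProduct.map_comp]
      have hz : (TensorProduct.map C1 C0 ∘ₗ H.comul) ∘ₗ ι.toLinearMap
          = (0 : R →ₗ[k] R ⊗[k] R) := by
        apply LinearMap.ext; intro r
        simp only [LinearMap.comp_apply, AlgHom.toLinearMap_apply, hΔR,
          LinearMap.zero_apply]
        exact hkill _
      rw [hz, TensorProduct.map_zero_left, LinearMap.zero_apply]
    have hkillΔR : TensorProduct.map C1 (TensorProduct.map C0 C0)
        (TensorProduct.map LinearMap.id H.comul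
          (TensorProduct.map ι.toLinearMap ι.toLinearMap w)) = 0 := by
      rw [← LinearMap.comp_apply, ← TensorProduct.map_comp,
        ← LinearMap.comp_apply, ← TensorProduct.map_comp, LinearMap.comp_id, hC1comp,
        TensorProduct.map_zero_left, LinearMap.zero_apply]
    have hcιβ : TensorProduct.map C0 C0 (H.comul (ι β)) = Coalgebra.comul (R := k) β := by
      rw [hΔR, hkill']
    have h2 := congrArg
      (TensorProduct.map (TensorProduct.map C1 C0) C0 :
        (T ⊗[k] T) ⊗[k] T →ₗ[k] (R ⊗[k] R) ⊗[k] R) h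
    rw [TensorProduct.map_map_assoc_symm] at h2
    simp only [map_add, TensorProduct.map_tmul, LinearMap.id_apply, H.comul_one,
      Algebra.TensorProduct.one_def, hmcx, hkillΔL, hkillΔR, hC1one, hC1x, hC0x, hC0ι,
      hcιβ, TensorProduct.tmul_zero, TensorProduct.zero_tmul, zero_add, add_zero] at h2
    rw [← TensorProduct.assoc_symm_tmul] at h2
    have h3 := (TensorProduct.assoc k R R R).symm.injective h2
    have h4 := congrArg (fun z => TensorProduct.lid k (R ⊗[k] R)
        (TensorProduct.map (Coalgebra.counit (R := k)) LinearMap.id z)) h3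
    simpa [TensorProduct.map_tmul, TensorProduct.lid_tmul,
      Bialgebra.counit_one] using h4.symm
  refine ⟨hΔβ, hε1, ?_, ?_⟩
  · have h := HopfAlgebra.mul_antipode_lTensor_comul_apply (R := k) (a := β)
    rw [hΔβ, hε1] at h
    simpa [LinearMap.lTensor_tmul, LinearMap.mul'_apply] using h
  · have h := HopfAlgebra.mul_antipode_rTensor_comul_apply (R := k) (a := β)
    rw [hΔβ, hε1] at h
    simpa [LinearMap.rTensor_tmul, LinearMap.mul'_apply] using h
end

section
/- Let k be an algebraically closed field and let R be a finitely generated commutative Hopf k-algebra that is a domain. Then R⊗_k R is a domain. -/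
/-!
Fix a `k`-basis `(bᵢ)` of the second factor and write `f = ∑ fᵢ ⊗ bᵢ`. A `k`-point `φ` of the
first factor sends `f` to `∑ φ(fᵢ) bᵢ`, which vanishes iff `φ` kills the ideal `I_f` generated by
the coefficients `fᵢ`. If `f g = 0`, then since the second factor is a domain every `k`-point,
hence by the Nullstellensatz every maximal ideal, contains `I_f` or `I_g`. So `I_f I_g` lies in
the Jacobson radical, which is `0` in a finitely generated domain; hence `I_f = 0` or `I_g = 0`.
-/

open scoped TensorProduct

open Algebra.TensorProduct in
theorem Module.Basis.repr_productMap_ofId_comp {k A B ι : Type*} [CommRing k] [CommRing A]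
    [CommRing B] [Algebra k A] [Algebra k B] (b : Module.Basis ι k B) (φ : A →ₐ[k] k)
    (f : A ⊗[k] B) :
    b.repr (productMap ((Algebra.ofId k B).comp φ) (AlgHom.id k B) f) =
      ((basis A b).repr f).mapRange φ (map_zero φ) := by
  induction f using TensorProduct.induction_on with
  | zero => simp
  | tmul a m =>
    ext i
    simp [← Algebra.smul_def]
  | add f g hf hg => simp [hf, hg, Finsupp.mapRange_add]

theorem exists_algHom_ker_eq_of_isMaximal {k A : Type*} [Field k] [IsAlgClosed k] [CommRing A]
    [Algebra k A] [Algebra.FiniteType k A] (m : Ideal A) [m.IsMaximal] :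
    ∃ φ : A →ₐ[k] k, RingHom.ker φ = m := by
  let : Field (A ⧸ m) := Ideal.Quotient.field m
  have : Module.Finite k (A ⧸ m) := finite_of_finite_type_of_isJacobsonRing k (A ⧸ m)
  let e : k ≃ₐ[k] A ⧸ m := AlgEquiv.ofBijective (Algebra.ofId k (A ⧸ m))
    IsAlgClosed.algebraMap_bijective_of_isIntegral
  refine ⟨e.symm.toAlgHom.comp (Ideal.Quotient.mkₐ k m), ?_⟩
  exact (RingHom.ker_comp_of_injective (Ideal.Quotient.mk m) e.symm.injective).trans Ideal.mk_ker

theorem Ideal.eq_bot_or_eq_bot_of_forall_isMaximal {A : Type*} [CommRing A] [IsDomain A]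
    [IsJacobsonRing A] {I J : Ideal A} (h : ∀ m : Ideal A, m.IsMaximal → I ≤ m ∨ J ≤ m) :
    I = ⊥ ∨ J = ⊥ := by
  have hIJ : I * J ≤ ⊥ := by
    rw [← IsJacobsonRing.out' ⊥ Ideal.isRadical_bot, Ideal.jacobson]
    refine le_sInf fun m ⟨_, hm⟩ => ?_
    exact (hm.isPrime.mul_le).2 (h m hm)
  simpa only [le_bot_iff] using Ideal.isPrime_bot.mul_le.1 hIJ

namespace Algebra.TensorProduct

section

variable {k A B ι : Type*} [CommRing k] [CommRing A] [CommRing B] [Algebra k A] [Algebra k B]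

noncomputable def coeffIdeal (b : Module.Basis ι k B) (f : A ⊗[k] B) : Ideal A :=
  Ideal.span (Set.range ((basis A b).repr f))

theorem coeffIdeal_eq_bot_iff (b : Module.Basis ι k B) (f : A ⊗[k] B) :
    coeffIdeal b f = ⊥ ↔ f = 0 := by
  rw [coeffIdeal, Ideal.span_eq_bot, Set.forall_mem_range, ← (basis A b).repr.map_eq_zero_iff,
    Finsupp.ext_iff]
  rfl

theorem productMap_ofId_comp_eq_zero_iff (b : Module.Basis ι k B) (φ : A →ₐ[k] k)
    (f : A ⊗[k] B) :
    productMap ((Algebra.ofId k B).comp φ) (AlgHom.id k B) f = 0 ↔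
      coeffIdeal b f ≤ RingHom.ker φ := by
  rw [← b.repr.map_eq_zero_iff, b.repr_productMap_ofId_comp, coeffIdeal, Ideal.span_le,
    Set.range_subset_iff, Finsupp.ext_iff]
  rfl

end

theorem isDomain_of_isAlgClosed {k A B : Type*} [Field k] [IsAlgClosed k]
    [CommRing A] [CommRing B] [Algebra k A] [Algebra k B] [IsDomain A] [Algebra.FiniteType k A]
    [IsDomain B] : IsDomain (A ⊗[k] B) := by
  let b := Module.Basis.ofVectorSpace k B
  have : IsJacobsonRing A := isJacobsonRing_of_finiteType (A := k)
  have : NoZeroDivisors (A ⊗[k] B) := by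
    refine ⟨fun {f g} hfg => ?_⟩
    simp only [← coeffIdeal_eq_bot_iff b]
    refine Ideal.eq_bot_or_eq_bot_of_forall_isMaximal fun m hm => ?_
    obtain ⟨φ, rfl⟩ := exists_algHom_ker_eq_of_isMaximal (k := k) m
    simp only [← productMap_ofId_comp_eq_zero_iff b, ← mul_eq_zero, ← map_mul, hfg, map_zero]
  exact NoZeroDivisors.to_isDomain _

end Algebra.TensorProduct

/-- Let `k` be an algebraically closed field and let `R` be a finitely generated commutative
Hopf `k`-algebra that is a domain.  Then `R ⊗ₖ R` is a domain. -/
theorem stmt17 {k R : Type*} [Field k] [IsAlgClosed k]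
    [CommRing R] [HopfAlgebra k R] [IsDomain R]
    (hfg : Algebra.FiniteType k R) :
    IsDomain (R ⊗[k] R) :=
  Algebra.TensorProduct.isDomain_of_isAlgClosed (A := R)
end
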